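/- Let 𝒯 be a teacher class over (X,Y,Φ) and let H be a nonempty history consistent with 𝒯. Then for every deterministic DFF algorithm 𝒜 we have M(𝒜,𝒯,H) ≥ DFFdim(𝒯,H); that is, there exist a finite sequence of examples and feedback consistent with some teacher in 𝒯_H on which 𝒜 makes at least DFFdim(𝒯,H) mistakes. -/

import Mathlib

open scoped Classical

/-- A teacher over examples `X`, labels `Y` and Boolean features `Φ`:
a labeling function together with a feature-feedback function that, whenever
two examples receive different labels, returns a feature of `Φ` satisfied by
the first example and not by the second. -/
structure Teacher (X Y : Type) (Φ : Set (X → Bool)) where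
  label : X → Y
  feedback : X → X → Option (X → Bool)
  feedback_spec : ∀ x xh : X, label x ≠ label xh →
    ∃ φ ∈ Φ, feedback x xh = some φ ∧ φ x = true ∧ φ xh = false

/-- A teacher is consistent with a history `H` of labeled examples. -/
def ConsistentH {X Y : Type} {Φ : Set (X → Bool)} (T : Teacher X Y Φ)
    (H : Set (X × Y)) : Prop :=
  ∀ p ∈ H, T.label p.1 = p.2

/-- Restriction of a teacher class by one round of DFF interaction: the
teachers that label `x` with `y` and give feature feedback `φ` on `(x, xh)`. -/
def TRestrict {X Y : Type} {Φ : Set (X → Bool)} (𝒯 : Set (Teacher X Y Φ))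
    (x xh : X) (y : Y) (φ : X → Bool) : Set (Teacher X Y Φ) :=
  {T | T ∈ 𝒯 ∧ T.label x = y ∧ T.feedback x xh = some φ}

/-- `ShatteredDFFT Φ 𝒯 H d` holds iff there is a DFF tree of height `d`
shattered by the teacher class `𝒯` and the history `H`: at a leaf, some
teacher of the current class is consistent with the accumulated history
(i.e. every root-to-leaf path of the tree is consistent with some teacher of
the original class that is consistent with the original history); at an inner
node a next example `x` is presented, and for every available explanation
pair `(xh, yh)` (an element of the history or a labeled example revealed
along the path, all of which are accumulated in `H`) there is teacher
feedback `(y, φ)` with `y ≠ yh` and `φ ∈ Φ` leading to a shattered subtree of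
height `d` for the correspondingly restricted class and extended history. -/
inductive ShatteredDFFT {X Y : Type} (Φ : Set (X → Bool)) :
    Set (Teacher X Y Φ) → Set (X × Y) → ℕ → Prop
  | leaf (𝒯 : Set (Teacher X Y Φ)) (H : Set (X × Y))
      (h : ∃ T ∈ 𝒯, ConsistentH T H) : ShatteredDFFT Φ 𝒯 H 0
  | node (𝒯 : Set (Teacher X Y Φ)) (H : Set (X × Y)) (d : ℕ) (x : X)
      (y : X × Y → Y) (φ : X × Y → (X → Bool))
      (hne : ∀ p ∈ H, y p ≠ p.2) (hΦ : ∀ p ∈ H, φ p ∈ Φ)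
      (h : ∀ p ∈ H,
        ShatteredDFFT Φ (TRestrict 𝒯 x p.1 (y p) (φ p)) (insert (x, y p) H) d) :
      ShatteredDFFT Φ 𝒯 H (d + 1)

/-- The DFF dimension of a teacher class `𝒯` with history `H`: the maximal
height of a DFF tree shattered by `𝒯` and `H` (possibly infinite). -/
noncomputable def DFFdim {X Y : Type} (Φ : Set (X → Bool))
    (𝒯 : Set (Teacher X Y Φ)) (H : Set (X × Y)) : ℕ∞ :=
  sSup {d : ℕ∞ | ∃ n : ℕ, d = n ∧ ShatteredDFFT Φ 𝒯 H n}
/-- A transcript of DFF interaction: each entry records the presented example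
`x`, the explanation `xh` and prediction `yh` output by the learner, and, on a
mistake round, the teacher feedback `(y, φ)` (`none` on correct rounds). -/
abbrev DFFTranscript (X Y : Type) : Type :=
  List (X × X × Y × Option (Y × Option (X → Bool)))

/-- A deterministic DFF algorithm: given the transcript so far and the next
example, output an explanation example together with a predicted label. -/
abbrev DFFAlg (X Y : Type) : Type := DFFTranscript X Y → X → X × Y

/-- The labeled examples revealed by a transcript: on a correct round the
predicted label is revealed to be correct; on a mistake round the teacher
reveals the correct label. -/
def revealed {X Y : Type} (tr : DFFTranscript X Y) : Set (X × Y) :=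
  {p | ∃ e ∈ tr, e.1 = p.1 ∧
    ((e.2.2.2 = none ∧ e.2.2.1 = p.2) ∨ ∃ φ, e.2.2.2 = some (p.2, φ))}

/-- One round of the realizable DFF protocol between algorithm `A` and
teacher `T`: present `x`, let the algorithm predict, and append the teacher's
feedback on a mistake. -/
noncomputable def dffStep {X Y : Type} {Φ : Set (X → Bool)} (A : DFFAlg X Y)
    (T : Teacher X Y Φ) (tr : DFFTranscript X Y) (x : X) : DFFTranscript X Y :=
  if (A tr x).2 = T.label x then tr ++ [(x, (A tr x).1, (A tr x).2, none)]
  else tr ++ [(x, (A tr x).1, (A tr x).2, some (T.label x, T.feedback x (A tr x).1))]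

/-- The transcript produced by running algorithm `A` against teacher `T` on a
finite sequence of examples. -/
noncomputable def dffRun {X Y : Type} {Φ : Set (X → Bool)} (A : DFFAlg X Y)
    (T : Teacher X Y Φ) (xs : List X) : DFFTranscript X Y :=
  xs.foldl (dffStep A T) []

/-- The number of mistake rounds in a transcript. -/
def dffMistakes {X Y : Type} (tr : DFFTranscript X Y) : ℕ :=
  tr.countP fun e => e.2.2.2.isSome

/-- A DFF algorithm is legal for `(𝒯, H)` if, on any transcript reachable by
interacting with a teacher of `𝒯` consistent with `H`, the explanation and
prediction it outputs form a pair of `H` or a previously revealed labeled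
example. -/
def LegalAlg {X Y : Type} {Φ : Set (X → Bool)} (A : DFFAlg X Y)
    (𝒯 : Set (Teacher X Y Φ)) (H : Set (X × Y)) : Prop :=
  ∀ T ∈ 𝒯, ConsistentH T H → ∀ (xs : List X) (x : X),
    A (dffRun A T xs) x ∈ H ∪ revealed (dffRun A T xs)

/-- The worst-case number of mistakes of algorithm `A` over all finite example
sequences and all teachers of `𝒯` consistent with `H` (possibly infinite). -/
noncomputable def MBound {X Y : Type} {Φ : Set (X → Bool)} (A : DFFAlg X Y)
    (𝒯 : Set (Teacher X Y Φ)) (H : Set (X × Y)) : ℕ∞ :=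
  sSup {m : ℕ∞ | ∃ T ∈ 𝒯, ConsistentH T H ∧
    ∃ xs : List X, m = (dffMistakes (dffRun A T xs) : ℕ∞)}

/-!
An adversary walks down a shattered tree, keeping the invariant that all teachers of the
current class produce the same transcript, whose revealed examples lie in the current history. At an inner node, legality forces the learner's explanation–prediction pair `p` into
the current history, so the tree provides feedback `(y p, φ p)` with `y p ≠ p.2`: a mistake
for every teacher of the restricted class, which again all produce the same transcript.
-/

section Adversary

variable {X Y : Type} {Φ : Set (X → Bool)}

lemma ConsistentH.mono {T : Teacher X Y Φ} {H H' : Set (X × Y)} (hT : ConsistentH T H')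
    (hH : H ⊆ H') : ConsistentH T H :=
  fun p hp => hT p (hH hp)

lemma TRestrict_subset (𝒯 : Set (Teacher X Y Φ)) (x xh : X) (y : Y) (φ : X → Bool) :
    TRestrict 𝒯 x xh y φ ⊆ 𝒯 :=
  fun _ hT => hT.1

lemma LegalAlg.mono {A : DFFAlg X Y} {𝒯 𝒯' : Set (Teacher X Y Φ)} {H : Set (X × Y)}
    (hA : LegalAlg A 𝒯 H) (h𝒯 : 𝒯' ⊆ 𝒯) : LegalAlg A 𝒯' H :=
  fun T hT => hA T (h𝒯 hT)

lemma ShatteredDFFT.exists_consistent {𝒯 : Set (Teacher X Y Φ)} {H : Set (X × Y)} {d : ℕ}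
    (h : ShatteredDFFT Φ 𝒯 H d) (hH : H.Nonempty) : ∃ T ∈ 𝒯, ConsistentH T H := by
  induction h with
  | leaf _ _ h => exact h
  | node _ _ _ x y _ _ _ _ ih =>
    obtain ⟨p, hp⟩ := hH
    obtain ⟨T, hT, hTH⟩ := ih p hp (Set.insert_nonempty _ _)
    exact ⟨T, hT.1, hTH.mono (Set.subset_insert _ _)⟩

@[simp]
lemma revealed_nil : revealed ([] : DFFTranscript X Y) = ∅ := by
  simp [revealed]

lemma revealed_append_mistake (tr : DFFTranscript X Y) (x xh : X) (yh y : Y)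
    (f : Option (X → Bool)) :
    revealed (tr ++ [(x, xh, yh, some (y, f))]) = insert (x, y) (revealed tr) := by
  ext ⟨x', y'⟩
  simp only [revealed, List.mem_append, List.mem_singleton, Set.mem_insert_iff,
    Set.mem_ofPred_eq, Prod.mk.injEq]
  constructor
  · rintro ⟨e, he | rfl, hx, hy⟩
    · exact Or.inr ⟨e, he, hx, hy⟩
    · simp_all
  · rintro (⟨rfl, rfl⟩ | ⟨e, he, hx, hy⟩)
    · exact ⟨_, Or.inr rfl, rfl, Or.inr ⟨f, rfl⟩⟩
    · exact ⟨e, Or.inl he, hx, hy⟩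

lemma dffMistakes_append_mistake (tr : DFFTranscript X Y) (x xh : X) (yh y : Y)
    (f : Option (X → Bool)) :
    dffMistakes (tr ++ [(x, xh, yh, some (y, f))]) = dffMistakes tr + 1 := by
  simp [dffMistakes, List.countP_append]

lemma dffRun_append_singleton (A : DFFAlg X Y) (T : Teacher X Y Φ) (xs : List X) (x : X) :
    dffRun A T (xs ++ [x]) = dffStep A T (dffRun A T xs) x := by
  simp [dffRun, List.foldl_append]

lemma dffRun_append_singleton_of_mistake {A : DFFAlg X Y} {T : Teacher X Y Φ} {xs : List X}
    {tr : DFFTranscript X Y} {x : X} (hrun : dffRun A T xs = tr) (hy : (A tr x).2 ≠ T.label x) :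
    dffRun A T (xs ++ [x]) =
      tr ++ [(x, (A tr x).1, (A tr x).2, some (T.label x, T.feedback x (A tr x).1))] := by
  rw [dffRun_append_singleton, hrun, dffStep, if_neg hy]

lemma ShatteredDFFT.exists_forced_mistakes {A : DFFAlg X Y} {𝒯 : Set (Teacher X Y Φ)}
    {H H' : Set (X × Y)} {d : ℕ} (hsh : ShatteredDFFT Φ 𝒯 H' d)
    (hcons : ∃ T ∈ 𝒯, ConsistentH T H') (hHH' : H ⊆ H') (hA : LegalAlg A 𝒯 H)
    {xs : List X} {tr : DFFTranscript X Y} (hrev : revealed tr ⊆ H')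
    (hrun : ∀ T ∈ 𝒯, dffRun A T xs = tr) :
    ∃ T ∈ 𝒯, ConsistentH T H' ∧
      ∃ ys, dffMistakes tr + d ≤ dffMistakes (dffRun A T (xs ++ ys)) := by
  induction hsh generalizing xs tr with
  | leaf _ _ h =>
    obtain ⟨T, hT, hTH⟩ := h
    exact ⟨T, hT, hTH, [], by simp [hrun T hT]⟩
  | node 𝒯 H' d x y φ hne _ h ih =>
    obtain ⟨T₀, hT₀, hT₀H'⟩ := hcons
    set p := A tr x
    have hp : p ∈ H' := by
      have hlegal := hA T₀ hT₀ (hT₀H'.mono hHH') xs x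
      rw [hrun T₀ hT₀] at hlegal
      exact Set.union_subset hHH' hrev hlegal
    set tr' := tr ++ [(x, p.1, p.2, some (y p, some (φ p)))]
    have hrun' : ∀ T ∈ TRestrict 𝒯 x p.1 (y p) (φ p), dffRun A T (xs ++ [x]) = tr' := by
      rintro T ⟨hT, hlabel, hfeedback⟩
      have hmistake : p.2 ≠ T.label x := hlabel ▸ (hne p hp).symm
      rw [dffRun_append_singleton_of_mistake (hrun T hT) hmistake, hlabel, hfeedback]
    have hrev' : revealed tr' ⊆ insert (x, y p) H' := by
      rw [revealed_append_mistake]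
      exact Set.insert_subset_insert hrev
    obtain ⟨T, hT, hTH', ys, hle⟩ :=
      ih p hp ((h p hp).exists_consistent (Set.insert_nonempty _ _))
        (hHH'.trans (Set.subset_insert _ _)) (hA.mono (TRestrict_subset ..)) hrev' hrun'
    refine ⟨T, hT.1, hTH'.mono (Set.subset_insert _ _), x :: ys, ?_⟩
    rw [dffMistakes_append_mistake, List.append_assoc, List.singleton_append] at hle
    omega

end Adversary

theorem dff_alg_mistakes_ge_DFFdim_general {X Y : Type}
    (Φ : Set (X → Bool)) (𝒯 : Set (Teacher X Y Φ)) (H : Set (X × Y))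
    (hcons : ∃ T ∈ 𝒯, ConsistentH T H)
    (A : DFFAlg X Y) (hA : LegalAlg A 𝒯 H) :
    DFFdim Φ 𝒯 H ≤ MBound A 𝒯 H := by
  refine sSup_le ?_
  rintro _ ⟨n, rfl, hsh⟩
  obtain ⟨T, hT, hTH, ys, hle⟩ := hsh.exists_forced_mistakes hcons subset_rfl hA
    (xs := []) (by simp) (fun _ _ => rfl)
  have hn : n ≤ dffMistakes (dffRun A T ys) := by simpa [dffMistakes] using hle
  exact le_sSup_of_le ⟨T, hT, hTH, ys, rfl⟩ (by exact_mod_cast hn)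

/-- **Lemma (lower bound).** Let `𝒯` be a teacher class over `(X, Y, Φ)`
(with `Y` a finite label set) and let `H` be a nonempty history consistent
with `𝒯`.  Then every deterministic DFF algorithm `𝒜` that is legal for
`(𝒯, H)` satisfies `M(𝒜, 𝒯, H) ≥ DFFdim(𝒯, H)`: the supremum over all
finite example sequences and teachers of `𝒯` consistent with `H` of the
number of mistakes of `𝒜` is at least `DFFdim(𝒯, H)`. -/
theorem dff_alg_mistakes_ge_DFFdim {X Y : Type} [Finite Y]
    (Φ : Set (X → Bool)) (𝒯 : Set (Teacher X Y Φ)) (H : Set (X × Y))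
    (hH : H.Nonempty) (hcons : ∃ T ∈ 𝒯, ConsistentH T H)
    (A : DFFAlg X Y) (hA : LegalAlg A 𝒯 H) :
    DFFdim Φ 𝒯 H ≤ MBound A 𝒯 H :=
  dff_alg_mistakes_ge_DFFdim_general Φ 𝒯 H hcons A hA
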